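/- arXiv:math/0409146 — 3 statements merged into one kernel-verified Lean document; each statement's English description precedes it below -/
import Mathlib

section
/- Proposition 1: The following two statements are equivalent: (KL) for every group G (in a fixed universe) and every element w of G ∗ ⟨t⟩∞, if G is nontrivial then G̃ = (G ∗ ⟨t⟩∞)/⟨⟨w⟩⟩ is nontrivial; (KLs) for every group G (in the same universe) and every element w of G ∗ ⟨t⟩∞, if G is not nonabelian simple then G̃ is not nonabelian simple. -/
open Monoid

/-- `G ∗ ⟨t⟩∞`: the free product of `G` with an infinite cyclic group. -/
abbrev GZ (G : Type*) [Group G] := Coprod G (FreeGroup Unit)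

/-- The generator `t` of the infinite cyclic factor. -/
def tGen (G : Type*) [Group G] : GZ G := Coprod.inr (FreeGroup.of ())

/-- `G̃ = (G ∗ ⟨t⟩∞)/⟨⟨w⟩⟩`. -/
abbrev Gtilde (G : Type*) [Group G] (w : GZ G) :=
  GZ G ⧸ Subgroup.normalClosure {w}

/-- The natural map `G → G̃`. -/
def natMap (G : Type*) [Group G] (w : GZ G) : G →* Gtilde G w :=
  (QuotientGroup.mk' (Subgroup.normalClosure {w})).comp Coprod.inl

/-- The exponent sum homomorphism `G ∗ ⟨t⟩∞ → ℤ` killing `G` and sending `t` to `1`. -/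
def expSum (G : Type*) [Group G] : GZ G →* Multiplicative ℤ :=
  Coprod.lift 1 (FreeGroup.lift fun _ => Multiplicative.ofAdd (1 : ℤ))

universe u

/-!
(KLs ⇒ KL): if `G ≠ 1` but `w` normally generates `G ∗ ⟨t⟩`, then the image of `w` in
`(G × A₅) ∗ ⟨t⟩` kills `G` and `t`, so the quotient is `A₅`, nonabelian simple, while `G × A₅` is
not simple.

(KL ⇒ KLs): let `G̃` be nonabelian simple. Since `G̃` is perfect, every abelian quotient of
`G ∗ ⟨t⟩` in which `w` dies is trivial; hence the exponent sum of `w` is `±1`, and `G` is not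
abelian. Under KL, exponent sum `±1` forces `G` to embed in `G̃`: let `G` act on
`X = G × ℤ × T`, `|T| ≥ |X|`, by left multiplication on the first factor; every `k ≠ 1` normally
generates `Sym X`, so if `k` died in `G̃`, all of `Sym X` would die in `(Sym X)~`, which would
then be generated by `t`, a power of `w`: trivial, against KL. Finally, if `G` were not simple, a
proper normal subgroup `N ≠ 1` would die in `G̃`, since `G̃` is simple and maps onto `(G/N)~`,
nontrivial by KL.

The normal generation is a Baer–Schreier–Ulam argument: every permutation of `X` is a product of
two permutations with `|X|` fixed points; such a permutation is conjugate to one supported on the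
slice `{1} × {0} × T`; and a permutation of that slice is a double commutator, first with
`k` acting on the `G`-coordinate, then with the shift of the `ℤ`-coordinate.
-/

open Cardinal
open scoped commutatorElement

namespace Cardinal

variable {α : Type*}

lemma mk_eq_of_subset {s t : Set α} (hst : s ⊆ t) (hs : #s = #α) : #t = #α :=
  le_antisymm (mk_set_le t) (hs.symm.le.trans (mk_le_mk_of_subset hst))

lemma exists_disjoint_subsets (s : Set α) (hs : ℵ₀ ≤ #s) :
    ∃ t u : Set α, t ⊆ s ∧ u ⊆ s ∧ Disjoint t u ∧ #t = #s ∧ #u = #s := by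
  obtain ⟨e⟩ := Cardinal.eq.mp (show #(s ⊕ s) = #s by rw [mk_sum, lift_id, add_eq_self hs])
  have hinj (i : s → s ⊕ s) (hi : Function.Injective i) :
      Function.Injective fun x => (e (i x) : α) :=
    Subtype.val_injective.comp (e.injective.comp hi)
  refine ⟨Set.range fun x => (e (.inl x) : α), Set.range fun x => (e (.inr x) : α),
    Set.range_subset_iff.mpr fun x => (e _).2, Set.range_subset_iff.mpr fun x => (e _).2, ?_,
    mk_range_eq _ (hinj _ Sum.inl_injective), mk_range_eq _ (hinj _ Sum.inr_injective)⟩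
  rw [Set.disjoint_left]
  rintro _ ⟨x, rfl⟩ ⟨y, hy⟩
  exact Sum.inr_ne_inl (e.injective (Subtype.val_injective hy))

end Cardinal

namespace Equiv.Perm

section Fiberwise

variable {α T : Type*}

def fiberwise : (α → Perm T) →* Perm (α × T) where
  toFun ρ := prodShear (Equiv.refl α) ρ
  map_one' := rfl
  map_mul' _ _ := rfl

@[simp] lemma fiberwise_apply (ρ : α → Perm T) (x : α × T) :
    fiberwise ρ x = (x.1, ρ x.1 x.2) := rfl

@[simp] lemma fiberwise_symm_apply (ρ : α → Perm T) (x : α × T) :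
    (fiberwise ρ).symm x = (x.1, (ρ x.1).symm x.2) := rfl

variable (T) in
def prodCongrFst : Perm α →* Perm (α × T) where
  toFun e := e.prodCongr (Equiv.refl T)
  map_one' := rfl
  map_mul' _ _ := rfl

@[simp] lemma prodCongrFst_apply (e : Perm α) (x : α × T) :
    prodCongrFst T e x = (e x.1, x.2) := rfl

@[simp] lemma prodCongrFst_symm_apply (e : Perm α) (x : α × T) :
    (prodCongrFst T e).symm x = (e.symm x.1, x.2) := rfl

lemma commutatorElement_fiberwise_prodCongrFst (ρ : α → Perm T) (e : Perm α) :
    ⁅fiberwise ρ, prodCongrFst T e⁆ = fiberwise (ρ * (ρ ∘ e.symm)⁻¹) := by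
  ext x <;> simp [commutatorElement_def, Perm.mul_apply, Perm.inv_def]

lemma fiberwise_mulSingle_zero_eq_commutatorElement (ρ : Perm T) :
    fiberwise (Pi.mulSingle (0 : ℤ) ρ) =
      ⁅fiberwise fun n : ℤ => if 0 ≤ n then ρ else 1, prodCongrFst T (Equiv.addRight 1)⁆ := by
  rw [commutatorElement_fiberwise_prodCongrFst]
  congr 1
  funext n
  rcases lt_trichotomy n 0 with h | rfl | h
  · simp [h.ne, h.not_ge, show ¬ 1 ≤ n by omega]
  · simp
  · simp [h.ne', h.le, show 1 ≤ n by omega]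

end Fiberwise

section LeftMul

variable {G : Type*} [Group G] [DecidableEq G] {T : Type*}

lemma mulSingle_comp_mulLeft_symm {M : Type*} [One M] (g k : G) (m : M) :
    Pi.mulSingle g m ∘ (Equiv.mulLeft k).symm = Pi.mulSingle (k * g) m := by
  funext x
  simp [Pi.mulSingle_apply, inv_mul_eq_iff_eq_mul]

lemma fiberwise_mulSingle_commutatorElement_mem {k : G} (hk : k ≠ 1) (h s : Perm T) :
    fiberwise (Pi.mulSingle (1 : G) ⁅h, s⁆) ∈
      Subgroup.normalClosure {prodCongrFst T (Equiv.mulLeft k)} := by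
  set N := Subgroup.normalClosure {prodCongrFst T (Equiv.mulLeft k)}
  -- `hcay` is `h` over `1` and `h⁻¹` over `k`; commuting it with `s` over `1` drops the part
  -- over `k ≠ 1`
  have hcay : ⁅fiberwise (Pi.mulSingle (1 : G) h), prodCongrFst T (Equiv.mulLeft k)⁆ ∈ N :=
    Subgroup.commutator_le_right ⊤ N <| Subgroup.commutator_mem_commutator (Subgroup.mem_top _)
      (Subgroup.subset_normalClosure rfl)
  rw [commutatorElement_fiberwise_prodCongrFst, mulSingle_comp_mulLeft_symm, mul_one] at hcay
  convert Subgroup.commutator_le_left N ⊤ <| Subgroup.commutator_mem_commutator hcay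
    (Subgroup.mem_top (fiberwise (Pi.mulSingle (1 : G) s))) using 1
  rw [← map_commutatorElement]
  congr 1
  funext g
  by_cases h1 : g = 1
  · simp [h1, hk.symm, commutatorElement_def]
  · by_cases h2 : g = k
    · subst h2
      simp [h1, commutatorElement_def]
    · simp [h1, h2, commutatorElement_def]

def sliceEquiv : T ≃ {x : G × ℤ × T // x.1 = 1 ∧ x.2.1 = 0} where
  toFun t := ⟨(1, 0, t), rfl, rfl⟩
  invFun x := x.1.2.2
  left_inv _ := rfl
  right_inv x := Subtype.ext (Prod.ext x.2.1.symm (Prod.ext x.2.2.symm rfl))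

lemma ofSubtype_mem_normalClosure {k : G} (hk : k ≠ 1)
    (τ : Perm {x : G × ℤ × T // x.1 = 1 ∧ x.2.1 = 0}) :
    ofSubtype τ ∈ Subgroup.normalClosure {prodCongrFst (ℤ × T) (Equiv.mulLeft k)} := by
  set ρ : Perm T := sliceEquiv.symm.permCongr τ
  have hρ := fiberwise_mulSingle_commutatorElement_mem (T := ℤ × T) hk
    (fiberwise fun n : ℤ => if 0 ≤ n then ρ else 1) (prodCongrFst T (Equiv.addRight 1))
  rw [← fiberwise_mulSingle_zero_eq_commutatorElement] at hρ
  convert hρ using 1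
  ext ⟨g, n, t⟩ : 1
  by_cases hx : g = 1 ∧ n = 0
  · obtain ⟨rfl, rfl⟩ := hx
    rw [ofSubtype_apply_of_mem τ ⟨rfl, rfl⟩]
    simp only [fiberwise_apply, Pi.mulSingle_eq_same, ρ, Equiv.permCongr_apply, Equiv.symm_symm]
    exact congrArg Subtype.val (sliceEquiv.apply_symm_apply _).symm
  · rw [ofSubtype_apply_of_not_mem τ hx]
    by_cases hg : g = 1
    · simp [hg, show n ≠ 0 from fun hn => hx ⟨hg, hn⟩]
    · simp [hg]

end LeftMul

section Infinite

variable {α : Type*}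

lemma exists_conj_fixes_compl {c : Perm α} {A : Set α} (hsupp : #{x | c x ≠ x} ≤ #A)
    (hfix : #{x | c x = x} = #α) (hA : #↑Aᶜ = #α) :
    ∃ γ : Perm α, ∀ x ∉ A, (γ * c * γ⁻¹) x = x := by
  obtain ⟨f⟩ := (Cardinal.le_def _ _).mp hsupp
  let f' : {x | c x ≠ x} ↪ α := f.trans (Function.Embedding.subtype _)
  have hf' : Set.range f' ⊆ A := Set.range_subset_iff.mpr fun x => (f x).2
  have hcompl : #↑({x | c x ≠ x}ᶜ) = #↑(Set.range f')ᶜ := by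
    rw [mk_eq_of_subset (Set.compl_subset_compl.mpr hf') hA, ← hfix]
    congr
    ext
    simp
  obtain ⟨γ, hγ⟩ := Cardinal.extend_function f' (Cardinal.eq.mp hcompl)
  refine ⟨γ, fun x hx => ?_⟩
  have hfixed : c (γ⁻¹ x) = γ⁻¹ x := by
    by_contra h
    have := hγ ⟨γ⁻¹ x, h⟩
    simp only [Perm.inv_def, Equiv.apply_symm_apply] at this
    exact hx (this ▸ hf' (Set.mem_range_self _))
  rw [Perm.mul_apply, Perm.mul_apply, hfixed, ← Perm.mul_apply, mul_inv_cancel, Perm.one_apply]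

lemma exists_mk_eq_forall_apply_notMem [Infinite α] (π : Perm α) (h : #{x | π x ≠ x} = #α) :
    ∃ M : Set α, (∀ x ∈ M, π x ∉ M) ∧ #M = #α := by
  obtain ⟨M, -, hM⟩ := zorn_subset_nonempty {M : Set α | ∀ x ∈ M, π x ∉ M}
    (fun c hc hchain _ => ⟨⋃₀ c, fun x ⟨F₁, hF₁, hx⟩ ⟨F₂, hF₂, hπx⟩ =>
      (hchain.total hF₁ hF₂).elim (fun h => hc hF₂ x (h hx) hπx) (fun h => hc hF₁ x hx (h hπx)),
      fun _ => Set.subset_sUnion_of_mem⟩) ∅ (by simp)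
  refine ⟨M, hM.prop, ?_⟩
  have hcover : {x | π x ≠ x} ⊆ M ∪ π ⁻¹' M ∪ π '' M := by
    intro x hx
    by_contra hxM
    simp only [Set.mem_union, not_or] at hxM
    obtain ⟨⟨hxM, hπxM⟩, hxπM⟩ := hxM
    refine hxM (hM.mem_of_prop_insert ?_)
    rintro y (rfl | hy)
    · rintro (h | h)
      exacts [hx h, hπxM h]
    · rintro (h | h)
      exacts [hxπM ⟨y, hy, h⟩, hM.prop y hy h]
  by_contra hne
  have hlt : #M < #α := (mk_set_le M).lt_of_ne hne
  have h₀ := aleph0_le_mk α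
  refine (mk_le_mk_of_subset hcover).not_gt (h ▸ ?_)
  calc #↑(M ∪ π ⁻¹' M ∪ π '' M) ≤ #M + #↑(π ⁻¹' M) + #↑(π '' M) :=
        (mk_union_le _ _).trans (add_le_add_left (mk_union_le _ _) _)
    _ < #α := add_lt_of_lt h₀ (add_lt_of_lt h₀ hlt
        ((mk_preimage_of_injective _ _ π.injective).trans_lt hlt)) (mk_image_le.trans_lt hlt)

lemma exists_forall_apply_notMem_mk_compl_eq [Infinite α] (π : Perm α)
    (h : #{x | π x ≠ x} = #α) :
    ∃ S : Set α, (∀ x ∈ S, π x ∉ S) ∧ #S = #α ∧ #↑(S ∪ π '' S)ᶜ = #α := by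
  obtain ⟨M, hM, hMα⟩ := exists_mk_eq_forall_apply_notMem π h
  obtain ⟨S, S', hS, hS', hdisj, hSM, hS'M⟩ :=
    exists_disjoint_subsets M (hMα ▸ aleph0_le_mk α)
  refine ⟨S, fun x hx => (hM x (hS hx) <| hS ·), hSM.trans hMα,
    mk_eq_of_subset ?_ (hS'M.trans hMα)⟩
  rintro y hy (hyS | ⟨x, hx, rfl⟩)
  exacts [Set.disjoint_left.mp hdisj hyS hy, hM x (hS hx) (hS' hy)]

lemma exists_eqOn_fixes_compl (π : Perm α) {S : Set α} (hS : ∀ x ∈ S, π x ∉ S) :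
    ∃ m : Perm α, Set.EqOn m π S ∧ ∀ x ∉ S ∪ π '' S, m x = x := by
  classical
  let f (x : α) : α := if x ∈ S then π x else if π.symm x ∈ S then π.symm x else x
  have hf : Function.Involutive f := by
    intro x
    by_cases hx : x ∈ S
    · simp [f, hx, hS x hx]
    · by_cases hx' : π.symm x ∈ S <;> simp [f, hx, hx']
  refine ⟨hf.toPerm f, fun x hx => by simp [f, hx], fun x hx => ?_⟩
  have hx' : π.symm x ∉ S := fun h => hx (.inr ⟨_, h, by simp⟩)
  have hxS : x ∉ S := fun h => hx (.inl h)
  simp [f, hx', hxS]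

lemma exists_mul_eq_mk_fixed [Infinite α] (π : Perm α) :
    ∃ a b : Perm α, #{x | a x = x} = #α ∧ #{x | b x = x} = #α ∧ a * b = π := by
  by_cases hπ : #{x | π x = x} = #α
  · exact ⟨π, 1, hπ, by simp, mul_one π⟩
  have hsupp : #{x | π x ≠ x} = #α := mk_compl_of_infinite _ ((mk_set_le _).lt_of_ne hπ)
  obtain ⟨S, hS, hSα, hcompl⟩ := exists_forall_apply_notMem_mk_compl_eq π hsupp
  obtain ⟨m, hmS, hm⟩ := exists_eqOn_fixes_compl π hS
  refine ⟨m, m⁻¹ * π, mk_eq_of_subset (fun x hx => hm x hx) hcompl,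
    mk_eq_of_subset (fun x hx => ?_) hSα, mul_inv_cancel_left m π⟩
  simp [Perm.mul_apply, ← hmS hx]

end Infinite

section NormalClosure

variable {G T : Type u} [Group G]

lemma mem_normalClosure_of_mk_fixed (hT : #(G × ℤ × T) ≤ #T) {k : G} (hk : k ≠ 1)
    {c : Perm (G × ℤ × T)} (hc : #{x | c x = x} = #(G × ℤ × T)) :
    c ∈ Subgroup.normalClosure {prodCongrFst (ℤ × T) (Equiv.mulLeft k)} := by
  classical
  let A : Set (G × ℤ × T) := {x | x.1 = 1 ∧ x.2.1 = 0}
  have hA : #{x | c x ≠ x} ≤ #A :=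
    ((mk_set_le _).trans hT).trans (mk_congr (sliceEquiv (G := G))).le
  have hAc : #↑Aᶜ = #(G × ℤ × T) := by
    have hsub : Set.range (fun t : T => ((1 : G), (1 : ℤ), t)) ⊆ Aᶜ := by
      rintro _ ⟨t, rfl⟩ ⟨-, h⟩
      exact one_ne_zero h
    refine le_antisymm (mk_set_le _) (hT.trans ?_)
    rw [← mk_range_eq (fun t : T => ((1 : G), (1 : ℤ), t)) fun s t h => congrArg (·.2.2) h]
    exact mk_le_mk_of_subset hsub
  obtain ⟨γ, hγ⟩ := exists_conj_fixes_compl hA hc hAc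
  set d := γ * c * γ⁻¹
  have hdA : ∀ x, d x ∈ A ↔ x ∈ A := fun x =>
    ⟨fun h => by_contra fun hx => hx (hγ x hx ▸ h),
     fun h => by_contra fun hx => hx (by rwa [d.injective (hγ _ hx)])⟩
  have hd := ofSubtype_mem_normalClosure (T := T) hk (d.subtypePerm hdA)
  rw [ofSubtype_subtypePerm _ fun x hx => by_contra fun h => hx (hγ x h)] at hd
  simpa [d, mul_assoc] using Subgroup.normalClosure_normal.conj_mem d hd γ⁻¹

theorem normalClosure_prodCongrFst_mulLeft_eq_top [Nonempty T] (hT : #(G × ℤ × T) ≤ #T)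
    {k : G} (hk : k ≠ 1) :
    Subgroup.normalClosure {prodCongrFst (ℤ × T) (Equiv.mulLeft k)} = ⊤ := by
  refine Subgroup.eq_top_iff' _ |>.mpr fun π => ?_
  obtain ⟨a, b, ha, hb, rfl⟩ := exists_mul_eq_mk_fixed π
  exact mul_mem (mem_normalClosure_of_mk_fixed hT hk ha) (mem_normalClosure_of_mk_fixed hT hk hb)

end NormalClosure

end Equiv.Perm

open Equiv.Perm in
theorem exists_injective_perm_normalClosure_eq_top (G : Type u) [Group G] :
    ∃ (X : Type u) (f : G →* Equiv.Perm X), Function.Injective f ∧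
      ∀ k ≠ 1, Subgroup.normalClosure {f k} = ⊤ := by
  refine ⟨G × ℤ × (G × ℤ), (prodCongrFst _).comp (MulAction.toPermHom G G), ?_, fun k hk => ?_⟩
  · refine (injective_iff_map_eq_one _).mpr fun k hk => ?_
    simpa using congrArg (fun σ => (σ ((1 : G), (0 : ℤ), ((1 : G), (0 : ℤ)))).1) hk
  · refine normalClosure_prodCongrFst_mulLeft_eq_top ?_ hk
    rw [← mk_congr (Equiv.prodAssoc G ℤ (G × ℤ)), mk_prod, lift_id, mul_eq_self]
    exact aleph0_le_mk _

section GZMap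

variable {G H : Type*} [Group G] [Group H]

def gzMap (f : G →* H) : GZ G →* GZ H := Coprod.map f (MonoidHom.id _)

@[simp] lemma gzMap_inl (f : G →* H) (g : G) : gzMap f (Coprod.inl g) = Coprod.inl (f g) := rfl

@[simp] lemma gzMap_inr (f : G →* H) (x : FreeGroup Unit) :
    gzMap f (Coprod.inr x) = Coprod.inr x := rfl

lemma gzMap_tGen (f : G →* H) : gzMap f (tGen G) = tGen H := rfl

@[simp] lemma expSum_inl (g : G) : expSum G (Coprod.inl g) = 1 := rfl

@[simp] lemma expSum_tGen : expSum G (tGen G) = Multiplicative.ofAdd 1 := by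
  simp [expSum, tGen]

@[simp] lemma expSum_gzMap (f : G →* H) (x : GZ G) : expSum H (gzMap f x) = expSum G x := by
  change ((expSum H).comp (gzMap f)) x = expSum G x
  congr 1
  exact Coprod.hom_ext (MonoidHom.ext fun _ => rfl) (MonoidHom.ext fun _ => rfl)

lemma gzMap_surjective {f : G →* H} (hf : Function.Surjective f) :
    Function.Surjective (gzMap f) := by
  intro y
  induction y using Coprod.induction_on with
  | inl h =>
    obtain ⟨g, rfl⟩ := hf h
    exact ⟨Coprod.inl g, rfl⟩
  | inr x => exact ⟨Coprod.inr x, rfl⟩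
  | mul x y hx hy =>
    obtain ⟨x, rfl⟩ := hx
    obtain ⟨y, rfl⟩ := hy
    exact ⟨x * y, map_mul _ x y⟩

end GZMap

lemma MonoidHom.eq_one_of_isSimpleGroup {S A : Type*} [Group S] [IsSimpleGroup S] [CommGroup A]
    (hS : ¬∀ a b : S, a * b = b * a) (φ : S →* A) : φ = 1 := by
  rcases IsSimpleGroup.eq_bot_or_eq_top_of_normal φ.ker φ.normal_ker with h | h
  · exact (hS fun a b => (φ.ker_eq_bot_iff.mp h) (by simp only [map_mul, mul_comm])).elim
  · exact MonoidHom.ker_eq_top_iff.mp h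

lemma MonoidHom.injective_of_isSimpleGroup {S H : Type*} [Group S] [IsSimpleGroup S] [Group H]
    [Nontrivial H] (f : S →* H) (hf : Function.Surjective f) : Function.Injective f := by
  refine f.ker_eq_bot_iff.mp <|
    (IsSimpleGroup.eq_bot_or_eq_top_of_normal _ f.normal_ker).resolve_right
    fun h => not_subsingleton H ⟨fun a b => ?_⟩
  obtain ⟨x, rfl⟩ := hf a
  obtain ⟨y, rfl⟩ := hf b
  simp [MonoidHom.ker_eq_top_iff.mp h]

namespace Gtilde

section Map

variable {G H : Type*} [Group G] [Group H]

lemma mk_self (w : GZ G) : (w : Gtilde G w) = 1 :=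
  (QuotientGroup.eq_one_iff w).mpr (Subgroup.subset_normalClosure rfl)

def map (f : G →* H) (w : GZ G) : Gtilde G w →* Gtilde H (gzMap f w) :=
  QuotientGroup.map _ _ (gzMap f) <| by
    simpa using Subgroup.comap_normalClosure_image_ge {w} (gzMap f)

@[simp] lemma map_natMap (f : G →* H) (w : GZ G) (g : G) :
    map f w (natMap G w g) = natMap H (gzMap f w) (f g) := rfl

lemma map_surjective {f : G →* H} (hf : Function.Surjective f) (w : GZ G) :
    Function.Surjective (map f w) :=
  QuotientGroup.map_surjective_of_surjective _ _ _
    (QuotientGroup.mk_surjective.comp (gzMap_surjective hf)) _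

lemma mk_gzMap_eq_one {w : GZ G} (hw : Subgroup.normalClosure {w} = ⊤) (f : G →* H)
    (x : GZ G) : (gzMap f x : Gtilde H (gzMap f w)) = 1 := by
  have : (x : Gtilde G w) = 1 := (QuotientGroup.eq_one_iff x).mpr (hw ▸ Subgroup.mem_top x)
  exact (congrArg (map f w) this).trans (map_one _)

end Map

lemma subsingleton_of_natMap_eq_one {G : Type*} [Group G] {w : GZ G} (hG : natMap G w = 1)
    (ht : expSum G (tGen G) ∈ Subgroup.zpowers (expSum G w)) : Subsingleton (Gtilde G w) := by
  set q := QuotientGroup.mk' (Subgroup.normalClosure {w})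
  have hq : q = (zpowersHom _ (q (tGen G))).comp (expSum G) := by
    refine Coprod.hom_ext ?_ (FreeGroup.ext_hom _ _ fun ⟨⟩ => ?_)
    · rw [← natMap, hG]
      ext
      simp
    · change q (tGen G) = zpowersHom _ (q (tGen G)) (expSum G (tGen G))
      simp
  have hqt : q (tGen G) = 1 := by
    obtain ⟨m, hm⟩ := Subgroup.mem_zpowers_iff.mp ht
    calc q (tGen G) = zpowersHom _ (q (tGen G)) (expSum G w ^ m) := by
          conv_lhs => rw [hq]
          rw [MonoidHom.comp_apply, hm]
      _ = q w ^ m := by rw [map_zpow, ← MonoidHom.comp_apply, ← hq]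
      _ = 1 := by rw [QuotientGroup.mk'_apply, mk_self, one_zpow]
  refine subsingleton_of_forall_eq 1 fun x => ?_
  obtain ⟨x, rfl⟩ := QuotientGroup.mk'_surjective _ x
  rw [DFunLike.congr_fun hq, hqt]
  simp

section Simple

variable {G : Type*} [Group G] {w : GZ G} [IsSimpleGroup (Gtilde G w)]

lemma eq_one_of_map_eq_one (hw : ¬∀ a b : Gtilde G w, a * b = b * a) {A : Type*} [CommGroup A]
    (φ : GZ G →* A) (hφ : φ w = 1) : φ = 1 := by
  have hle : Subgroup.normalClosure {w} ≤ φ.ker :=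
    Subgroup.normalClosure_le_normal (Set.singleton_subset_iff.mpr hφ)
  refine MonoidHom.ext fun x => ?_
  simpa [MonoidHom.eq_one_of_isSimpleGroup hw (QuotientGroup.lift _ φ hle)] using
    (QuotientGroup.lift_mk' _ hle x).symm

lemma expSum_tGen_mem_zpowers (hw : ¬∀ a b : Gtilde G w, a * b = b * a) :
    expSum G (tGen G) ∈ Subgroup.zpowers (expSum G w) := by
  have := eq_one_of_map_eq_one hw ((QuotientGroup.mk' (Subgroup.zpowers (expSum G w))).comp
    (expSum G)) ((QuotientGroup.eq_one_iff _).mpr (Subgroup.mem_zpowers _))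
  exact (QuotientGroup.eq_one_iff _).mp (DFunLike.congr_fun this (tGen G))

lemma subsingleton_of_forall_commute (hw : ¬∀ a b : Gtilde G w, a * b = b * a)
    (hG : ∀ a b : G, a * b = b * a) : Subsingleton G := by
  let : CommGroup G := { mul_comm := hG }
  -- `θ w` generates the abelianization `G × ℤ` of `G ∗ ⟨t⟩`; its `ℤ`-component is nonzero
  let θ : GZ G →* G × Multiplicative ℤ := (Coprod.lift (MonoidHom.id G) 1).prod (expSum G)
  have hθ := eq_one_of_map_eq_one hw ((QuotientGroup.mk' (Subgroup.zpowers (θ w))).comp θ)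
    ((QuotientGroup.eq_one_iff _).mpr (Subgroup.mem_zpowers _))
  have hexp : expSum G w ≠ 1 := fun h => by
    simpa [h] using expSum_tGen_mem_zpowers hw
  refine subsingleton_of_forall_eq 1 fun g => ?_
  obtain ⟨j, hj⟩ := Subgroup.mem_zpowers_iff.mp <|
    (QuotientGroup.eq_one_iff _).mp (DFunLike.congr_fun hθ (Coprod.inl g))
  have hj0 : j = 0 := by
    simpa [θ, hexp, IsMulTorsionFree.zpow_eq_one_iff] using congrArg Prod.snd hj
  simpa [θ, hj0] using (congrArg Prod.fst hj).symm

lemma le_ker_natMap {N : Subgroup G} [N.Normal]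
    (hN : Nontrivial (Gtilde (G ⧸ N) (gzMap (QuotientGroup.mk' N) w))) :
    N ≤ (natMap G w).ker := by
  have hinj := (map (QuotientGroup.mk' N) w).injective_of_isSimpleGroup
    (map_surjective (QuotientGroup.mk'_surjective N) w)
  intro n hn
  apply hinj
  rw [map_natMap, map_one, QuotientGroup.mk'_apply, (QuotientGroup.eq_one_iff n).mpr hn, map_one]

end Simple

def prodMulEquiv {G : Type*} [Group G] {w : GZ G} (hw : Subgroup.normalClosure {w} = ⊤)
    (H : Type*) [Group H] : Gtilde (G × H) (gzMap (MonoidHom.inl G H) w) ≃* H :=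
  have hle : Subgroup.normalClosure {gzMap (MonoidHom.inl G H) w} ≤
      (Coprod.lift (MonoidHom.snd G H) 1).ker := by
    refine Subgroup.normalClosure_le_normal (Set.singleton_subset_iff.mpr ?_)
    rw [SetLike.mem_coe, MonoidHom.mem_ker, ← MonoidHom.comp_apply,
      show (Coprod.lift (MonoidHom.snd G H) 1).comp (gzMap (MonoidHom.inl G H)) = 1 from
        Coprod.hom_ext (MonoidHom.ext fun _ => rfl) (MonoidHom.ext fun _ => rfl)]
    rfl
  MonoidHom.toMulEquiv (QuotientGroup.lift _ _ hle)
    ((QuotientGroup.mk' _).comp (Coprod.inl.comp (MonoidHom.inr G H)))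
    (QuotientGroup.monoidHom_ext _ <| Coprod.hom_ext (MonoidHom.ext fun ⟨g, h⟩ => by
      have hg := mk_gzMap_eq_one hw (MonoidHom.inl G H) (Coprod.inl g)
      have hgh : ((g, h) : G × H) = (g, 1) * (1, h) := by simp
      simp only [gzMap_inl, MonoidHom.inl_apply] at hg
      simp only [MonoidHom.comp_apply, QuotientGroup.mk'_apply, QuotientGroup.lift_mk,
        Coprod.lift_apply_inl, MonoidHom.coe_snd, MonoidHom.inr_apply, MonoidHom.id_apply]
      rw [hgh, map_mul, QuotientGroup.mk_mul, hg, one_mul])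
      (MonoidHom.ext fun x => by
        have hx := mk_gzMap_eq_one hw (MonoidHom.inl G H) (Coprod.inr x)
        simp only [gzMap_inr] at hx
        simp only [MonoidHom.comp_apply, QuotientGroup.mk'_apply, map_one, hx]))
    (MonoidHom.ext fun h => by simp)

end Gtilde

lemma not_isSimpleGroup_prod (G H : Type*) [Group G] [Group H] [Nontrivial G] [Nontrivial H] :
    ¬IsSimpleGroup (G × H) := by
  intro
  obtain ⟨g, hg⟩ := exists_ne (1 : G)
  obtain ⟨h, hh⟩ := exists_ne (1 : H)
  rcases IsSimpleGroup.eq_bot_or_eq_top_of_normal _ (MonoidHom.snd G H).normal_ker with hk | hk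
  · have : ((g, 1) : G × H) ∈ (MonoidHom.snd G H).ker := MonoidHom.mem_ker.mpr rfl
    rw [hk, Subgroup.mem_bot] at this
    exact hg (congrArg Prod.fst this)
  · have : ((1, h) : G × H) ∈ (MonoidHom.snd G H).ker := hk ▸ Subgroup.mem_top _
    exact hh (MonoidHom.mem_ker.mp this)

lemma alternatingGroup_fin_five_not_comm : ¬∀ a b : alternatingGroup (Fin 5), a * b = b * a :=
  fun h => alternatingGroup.isMulCommutative_iff_card_le_three.not.mpr (by simp) ⟨⟨h⟩⟩

theorem Gtilde.natMap_injective_of_kl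
    (hKL : ∀ (G : Type u) [Group G], ∀ w : GZ G, Nontrivial G → Nontrivial (Gtilde G w))
    {G : Type u} [Group G] {w : GZ G} (ht : expSum G (tGen G) ∈ Subgroup.zpowers (expSum G w)) :
    Function.Injective (natMap G w) := by
  refine (injective_iff_map_eq_one _).mpr fun k hkw => by_contra fun hk => ?_
  obtain ⟨X, f, hf, hX⟩ := exists_injective_perm_normalClosure_eq_top G
  have : Nontrivial (Equiv.Perm X) := ⟨⟨f k, 1, fun h => hk (hf (h.trans (map_one f).symm))⟩⟩
  have hE : natMap (Equiv.Perm X) (gzMap f w) = 1 := by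
    refine MonoidHom.ker_eq_top_iff.mp (top_le_iff.mp (hX k hk ▸ ?_))
    refine Subgroup.normalClosure_le_normal (Set.singleton_subset_iff.mpr ?_)
    rw [SetLike.mem_coe, MonoidHom.mem_ker, ← Gtilde.map_natMap, hkw, map_one]
  have := hKL _ (gzMap f w) this
  refine not_subsingleton _ (Gtilde.subsingleton_of_natMap_eq_one hE ?_)
  simpa only [← gzMap_tGen f, expSum_gzMap] using ht

theorem isSimpleGroup_of_kl
    (hKL : ∀ (G : Type u) [Group G], ∀ w : GZ G, Nontrivial G → Nontrivial (Gtilde G w))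
    {G : Type u} [Group G] {w : GZ G} [IsSimpleGroup (Gtilde G w)]
    (hw : ¬∀ a b : Gtilde G w, a * b = b * a) :
    IsSimpleGroup G ∧ ¬∀ a b : G, a * b = b * a := by
  have ht := Gtilde.expSum_tGen_mem_zpowers hw
  have hG : ¬∀ a b : G, a * b = b * a := fun hG => by
    have := Gtilde.subsingleton_of_forall_commute hw hG
    exact not_subsingleton (Gtilde G w) <| Gtilde.subsingleton_of_natMap_eq_one
      (MonoidHom.ext fun g => by simp [Subsingleton.elim g 1]) ht
  refine ⟨?_, hG⟩
  have : Nontrivial G :=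
    not_subsingleton_iff_nontrivial.mp fun _ => hG fun a b => Subsingleton.elim _ _
  by_contra hsimple
  obtain ⟨N, hN, hNbot, hNtop⟩ : ∃ N : Subgroup G, N.Normal ∧ N ≠ ⊥ ∧ N ≠ ⊤ := by
    simpa [isSimpleGroup_iff, this] using hsimple
  obtain ⟨k, hkN, hk⟩ := N.bot_or_exists_ne_one.resolve_left hNbot
  have hkw : natMap G w k = 1 :=
    Gtilde.le_ker_natMap (hKL _ _ (QuotientGroup.nontrivial_iff.mpr hNtop)) hkN
  exact hk (Gtilde.natMap_injective_of_kl hKL ht (hkw.trans (map_one _).symm))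

/-- **Proposition 1**: the Kervaire–Laudenbach conjecture (KL) is equivalent to
its "simple" version (KLs). -/
theorem proposition1 :
    (∀ (G : Type u) [Group G], ∀ w : GZ G,
        Nontrivial G → Nontrivial (Gtilde G w)) ↔
      (∀ (G : Type u) [Group G], ∀ w : GZ G,
        ¬ (IsSimpleGroup G ∧ ¬ ∀ a b : G, a * b = b * a) →
          ¬ (IsSimpleGroup (Gtilde G w) ∧ ¬ ∀ a b : Gtilde G w, a * b = b * a)) := by
  refine ⟨fun hKL G _ w hG ⟨_, hw⟩ => hG (isSimpleGroup_of_kl hKL hw), fun hKLs G _ w _ => ?_⟩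
  by_contra hw
  rw [not_nontrivial_iff_subsingleton, QuotientGroup.subsingleton_iff] at hw
  let e := Gtilde.prodMulEquiv hw (alternatingGroup (Fin 5))
  refine hKLs (G × alternatingGroup (Fin 5)) _ (fun h => not_isSimpleGroup_prod _ _ h.1)
    ⟨e.isSimpleGroup, fun h => alternatingGroup_fin_five_not_comm fun a b => ?_⟩
  simpa using congrArg e (h (e.symm a) (e.symm b))
end

section
/- Claim from the proof of Proposition 1: Let G and S be groups and w ∈ G ∗ ⟨t⟩∞ such that G̃ = (G ∗ ⟨t⟩∞)/⟨⟨w⟩⟩ is trivial. Let w' ∈ (G × S) ∗ ⟨t⟩∞ be the image of w under the homomorphism G ∗ ⟨t⟩∞ → (G × S) ∗ ⟨t⟩∞ induced by g ↦ (g, 1) and t ↦ t. Then the quotient ((G × S) ∗ ⟨t⟩∞)/⟨⟨w'⟩⟩ is isomorphic to S. -/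
open Monoid

/-!
Write `j : G ∗ F → (G × S) ∗ F` for the map induced by `g ↦ (g, 1)`. Since `w` normally
generates `G ∗ F`, its image `j w` normally generates a subgroup containing all of `j(G ∗ F)`,
i.e. the normal closure of `G × 1` and `F`. That is exactly the kernel of the retraction
`(G × S) ∗ F → S` which projects `G × S` onto `S` and kills `F`.
-/

theorem MonoidHom.range_le_normalClosure_of_normalClosure_eq_top {A B : Type*} [Group A]
    [Group B] (f : A →* B) {w : A} (hw : Subgroup.normalClosure {w} = ⊤) :
    f.range ≤ Subgroup.normalClosure {f w} := by
  rw [MonoidHom.range_eq_map, ← hw, ← Set.image_singleton]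
  exact Subgroup.map_normalClosure_le _ f

namespace Monoid.Coprod

variable {G S F : Type*} [Group G] [Group S] [Group F]

def prodSnd : Coprod (G × S) F →* S :=
  lift (MonoidHom.snd G S) 1

@[simp]
theorem prodSnd_inl (p : G × S) : prodSnd (inl p : Coprod (G × S) F) = p.2 := by
  simp [prodSnd]

theorem prodSnd_comp_map_inl :
    (prodSnd : Coprod (G × S) F →* S).comp (map (MonoidHom.inl G S) (MonoidHom.id F)) = 1 := by
  ext <;> simp [prodSnd]

theorem prodSnd_surjective : Function.Surjective (prodSnd : Coprod (G × S) F →* S) :=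
  fun s => ⟨inl (1, s), prodSnd_inl _⟩

theorem ker_prodSnd_le {N : Subgroup (Coprod (G × S) F)} [N.Normal]
    (hN : (map (MonoidHom.inl G S) (MonoidHom.id F)).range ≤ N) :
    (prodSnd : Coprod (G × S) F →* S).ker ≤ N := by
  have hfactor : QuotientGroup.mk' N =
      (QuotientGroup.mk' N |>.comp (inl.comp (MonoidHom.inr G S))).comp prodSnd := by
    ext p
    · have hsplit : (inl p : Coprod (G × S) F) = inl (p.1, 1) * inl (1, p.2) := by
        rw [← map_mul, Prod.mk_mul_mk, mul_one, one_mul]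
      have hG : inl (p.1, 1) ∈ N := hN ⟨inl p.1, rfl⟩
      simp [hsplit, hG]
    · have hF : inr p ∈ N := hN ⟨inr p, rfl⟩
      simp [hF, prodSnd, Prod.mk_one_one]
  intro x hx
  rw [← QuotientGroup.eq_one_iff, ← QuotientGroup.mk'_apply, hfactor, MonoidHom.comp_apply,
    MonoidHom.mem_ker.mp hx, map_one]

theorem normalClosure_map_inl_eq_ker_prodSnd {w : Coprod G F}
    (hw : Subgroup.normalClosure {w} = ⊤) :
    Subgroup.normalClosure {map (MonoidHom.inl G S) (MonoidHom.id F) w} =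
      (prodSnd : Coprod (G × S) F →* S).ker := by
  refine le_antisymm (Subgroup.normalClosure_le_normal ?_) <|
    ker_prodSnd_le ((map (MonoidHom.inl G S) (MonoidHom.id F)).range_le_normalClosure_of_normalClosure_eq_top hw)
  rw [Set.singleton_subset_iff, SetLike.mem_coe, MonoidHom.mem_ker, ← MonoidHom.comp_apply,
    prodSnd_comp_map_inl, MonoidHom.one_apply]

noncomputable def quotientNormalClosureMapInlEquiv (w : Coprod G F)
    (hw : Subgroup.normalClosure {w} = ⊤) :
    Coprod (G × S) F ⧸ Subgroup.normalClosure {map (MonoidHom.inl G S) (MonoidHom.id F) w} ≃* S :=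
  (QuotientGroup.quotientMulEquivOfEq (normalClosure_map_inl_eq_ker_prodSnd (S := S) hw)).trans
    (QuotientGroup.quotientKerEquivOfSurjective _ prodSnd_surjective)

end Monoid.Coprod

/-- Claim from the proof of Proposition 1: if `G̃` is trivial and `w'` is the
image of `w` under the homomorphism `G ∗ ⟨t⟩∞ → (G × S) ∗ ⟨t⟩∞` induced by
`g ↦ (g, 1)` and `t ↦ t`, then `((G × S) ∗ ⟨t⟩∞)/⟨⟨w'⟩⟩ ≅ S`. -/
theorem quotient_iso_of_trivial (G S : Type*) [Group G] [Group S] (w : GZ G)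
    (htriv : ∀ x : Gtilde G w, x = 1) :
    Nonempty
      (Gtilde (G × S) (Coprod.map (MonoidHom.inl G S) (MonoidHom.id _) w) ≃* S) := by
  have : Subsingleton (Gtilde G w) := ⟨fun x y => (htriv x).trans (htriv y).symm⟩
  exact ⟨Coprod.quotientNormalClosureMapInlEquiv w (QuotientGroup.subsingleton_iff.mp this)⟩
end

section
/- Lemma 1 (first assertion): Let A and B be torsion-free groups and let u be an element of the free product A ∗ B not lying in (the image of) A. Then the subgroup of A ∗ B generated by A and u is the free product of A and the infinite cyclic group generated by u; equivalently, the homomorphism A ∗ ℤ → A ∗ B that restricts to the canonical inclusion on A and sends a generator t of the ℤ-factor to u is injective. -/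
open Monoid

/-- Torsion-free monoid (the old Mathlib `Monoid.IsTorsionFree`, removed since). -/
def Monoid.IsTorsionFree (G : Type*) [Monoid G] : Prop :=
  ∀ g : G, g ≠ 1 → ¬IsOfFinOrder g

/-!
Write `u = a * v * a'` with `a, a' ∈ A` and `v` a reduced word whose first and last letters lie
in `B`; this is possible because `u ∉ A`. The substitution `t ↦ a * t * a'` is an automorphism of
`A ∗ ⟨t⟩`, so it suffices to treat `v`. Torsion-freeness makes every nonzero power of `v` a reduced
word that again begins and ends in `B`: cyclically reduce `v`, and use that a nontrivial letter has
nontrivial powers. Hence a reduced word `a₀ t^n₁ a₁ ⋯ t^nₖ aₖ` is sent to the reduced word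
`a₀ v^n₁ a₁ ⋯ v^nₖ aₖ`, which is nontrivial.
-/

open Function

theorem Monoid.IsTorsionFree.pow_ne_one {G : Type*} [Monoid G] (h : IsTorsionFree G) {g : G}
    (hg : g ≠ 1) {n : ℕ} (hn : n ≠ 0) : g ^ n ≠ 1 :=
  fun hgn => h g hg (isOfFinOrder_iff_pow_eq_one.mpr ⟨n, Nat.pos_of_ne_zero hn, hgn⟩)

theorem Monoid.IsTorsionFree.of_injective {G H : Type*} [Group G] [Group H] {f : G →* H}
    (hf : Injective f) (h : IsTorsionFree H) : IsTorsionFree G :=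
  fun g hg hfin => h (f g) ((map_ne_one_iff f hf).mpr hg) (hf.isOfFinOrder_iff.mpr hfin)

namespace Monoid.CoprodI.NeWord

section Monoid

variable {ι : Type*} {M : ι → Type*} [∀ i, Monoid (M i)]

theorem head_ne_one {i j} (w : NeWord M i j) : w.head ≠ 1 := by
  induction w with
  | singleton _ h => exact h
  | append _ _ _ ih _ => exact ih

theorem last_ne_one {i j} (w : NeWord M i j) : w.last ≠ 1 := by
  induction w with
  | singleton _ h => exact h
  | append _ _ _ _ ih => exact ih

theorem prod_ne_one {i j} (w : NeWord M i j) : w.prod ≠ 1 := by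
  classical
  intro h
  have hw : w.toWord = Word.empty := Word.equiv.symm.injective (h.trans Word.prod_empty.symm)
  exact w.toList_ne_nil (congrArg Word.toList hw)

theorem exists_prod_eq {x : CoprodI M} (hx : x ≠ 1) : ∃ i j, ∃ w : NeWord M i j, w.prod = x := by
  classical
  have hword : Word.equiv x ≠ Word.empty := fun h => hx <| by
    rw [← Word.equiv.symm_apply_apply x, h]
    exact Word.prod_empty
  obtain ⟨i, j, w, hw⟩ := of_word _ hword
  exact ⟨i, j, w, by rw [prod, hw]; exact Word.equiv.symm_apply_apply x⟩

theorem prod_eq_head_or_exists_tail {i j} (w : NeWord M i j) :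
    (i = j ∧ w.prod = of w.head) ∨ ∃ k, k ≠ i ∧ ∃ w' : NeWord M k j, w'.last = w.last ∧
      w'.toList.length < w.toList.length ∧ w.prod = of w.head * w'.prod := by
  induction w with
  | singleton x hx => exact .inl ⟨rfl, prod_singleton x hx⟩
  | append w₁ hne w₂ ih₁ _ =>
    right
    rcases ih₁ with ⟨rfl, h₁⟩ | ⟨k, hk, w₁', -, hlen, h₁⟩
    · exact ⟨_, hne.symm, w₂, rfl, by simpa using List.length_pos_iff.mpr w₁.toList_ne_nil,
        by simp [h₁]⟩
    · exact ⟨k, hk, w₁'.append hne w₂, rfl, by simp; omega, by simp [h₁, mul_assoc]⟩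

theorem prod_eq_last_or_exists_init {i j} (w : NeWord M i j) :
    (i = j ∧ w.prod = of w.last) ∨ ∃ k, k ≠ j ∧ ∃ w' : NeWord M i k,
      w'.toList.length < w.toList.length ∧ w.prod = w'.prod * of w.last := by
  induction w with
  | singleton x hx => exact .inl ⟨rfl, prod_singleton x hx⟩
  | append w₁ hne w₂ _ ih₂ =>
    right
    rcases ih₂ with ⟨rfl, h₂⟩ | ⟨k, hk, w₂', hlen, h₂⟩
    · exact ⟨_, hne, w₁, by simpa using List.length_pos_iff.mpr w₂.toList_ne_nil, by simp [h₂]⟩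
    · exact ⟨k, hk, w₁.append hne w₂', by simp; omega, by simp [h₂, mul_assoc]⟩

theorem exists_prod_eq_pow_of_ne {i j} (hij : i ≠ j) (w : NeWord M i j) {n : ℕ} (hn : n ≠ 0) :
    ∃ w' : NeWord M i j, w'.prod = w.prod ^ n := by
  obtain ⟨n, rfl⟩ := Nat.exists_eq_add_one_of_ne_zero hn
  induction n with
  | zero => exact ⟨w, by simp⟩
  | succ n ih =>
    obtain ⟨w', hw'⟩ := ih n.succ_ne_zero
    exact ⟨w.append hij.symm w', by rw [append_prod, hw', pow_succ' _ (n + 1)]⟩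

/-- No cancellation occurs between consecutive factors of the power, since `b * a ≠ 1`. -/
theorem exists_prod_eq_pow_of_mul_ne_one {i j k} (hj : j ≠ i) (hk : k ≠ i) {a b : M i}
    (ha : a ≠ 1) (hb : b ≠ 1) (hba : b * a ≠ 1) (m : NeWord M j k) {n : ℕ} (hn : n ≠ 0) :
    ∃ w : NeWord M i i, w.head = a ∧ w.prod = (of a * m.prod * of b) ^ n := by
  obtain ⟨n, rfl⟩ := Nat.exists_eq_add_one_of_ne_zero hn
  induction n with
  | zero =>
    exact ⟨((singleton a ha).append hj.symm m).append hk (singleton b hb), rfl, by simp⟩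
  | succ n ih =>
    obtain ⟨w, hwa, hw⟩ := ih n.succ_ne_zero
    refine ⟨((singleton a ha).append hj.symm m).append hk (w.mulHead b (hwa ▸ hba)), rfl, ?_⟩
    simp [hw, pow_succ' _ (n + 1), mul_assoc]

end Monoid

section Group

variable {ι : Type*} {G : ι → Type*} [∀ i, Group (G i)]

theorem exists_prod_eq_pow_of_isTorsionFree (htf : ∀ i, IsTorsionFree (G i)) {i}
    (w : NeWord G i i) {n : ℕ} (hn : n ≠ 0) : ∃ w' : NeWord G i i, w'.prod = w.prod ^ n := by
  rcases w.prod_eq_head_or_exists_tail with ⟨-, hw⟩ | ⟨k, hk, w', hlast, hlen, hw⟩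
  · exact ⟨singleton _ ((htf i).pow_ne_one w.head_ne_one hn), by simp [hw]⟩
  rcases w'.prod_eq_last_or_exists_init with ⟨rfl, -⟩ | ⟨l, hl, m, hlen', hw'⟩
  · exact absurd rfl hk
  rw [hw', hlast, ← mul_assoc] at hw
  by_cases hseam : w.last * w.head = 1
  · -- `w` is a conjugate `a * m * a⁻¹`, so its powers are conjugates of powers of the shorter `m`
    obtain ⟨μ, hμ⟩ : ∃ μ : NeWord G k l, μ.prod = m.prod ^ n := by
      by_cases hkl : k = l
      · subst hkl
        exact exists_prod_eq_pow_of_isTorsionFree htf m hn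
      · exact m.exists_prod_eq_pow_of_ne hkl hn
    have hinv : w.last = w.head⁻¹ := eq_inv_of_mul_eq_one_left hseam
    refine ⟨((singleton _ w.head_ne_one).append hk.symm μ).append hl
      (singleton _ (inv_ne_one.mpr w.head_ne_one)), ?_⟩
    rw [hw, hinv, map_inv, conj_pow]
    simp [hμ]
  · obtain ⟨w'', -, hw''⟩ := exists_prod_eq_pow_of_mul_ne_one hk hl w.head_ne_one
      w.last_ne_one hseam m hn
    exact ⟨w'', hw''.trans (by rw [hw])⟩
termination_by w.toList.length
decreasing_by omega

theorem exists_prod_eq_pow (htf : ∀ i, IsTorsionFree (G i)) {i j} (w : NeWord G i j) {n : ℕ}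
    (hn : n ≠ 0) : ∃ w' : NeWord G i j, w'.prod = w.prod ^ n := by
  by_cases hij : i = j
  · subst hij
    exact w.exists_prod_eq_pow_of_isTorsionFree htf hn
  · exact w.exists_prod_eq_pow_of_ne hij hn

end Group

end Monoid.CoprodI.NeWord

namespace Monoid.CoprodI

variable {ι : Type*} {G : ι → Type*} [∀ i, Group (G i)]

/-- Reduced words are sent to reduced words: consecutive letters come from different factors
`H i`, whose images begin and end in disjoint blocks `π ⁻¹' {i}`. -/
theorem lift_injective_of_neWord {κ : Type*} {H : κ → Type*} [∀ i, Group (H i)]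
    (f : ∀ i, H i →* CoprodI G) (π : ι → κ)
    (hf : ∀ i (x : H i), x ≠ 1 →
      ∃ j k, ∃ w : NeWord G j k, π j = i ∧ π k = i ∧ w.prod = f i x) :
    Injective (lift f) := by
  have hword : ∀ {i i'} (ω : NeWord H i i'),
      ∃ j k, ∃ w : NeWord G j k, π j = i ∧ π k = i' ∧ w.prod = lift f ω.prod := by
    intro i i' ω
    induction ω with
    | singleton x hx => simpa using hf _ x hx
    | append _ hne _ ih₁ ih₂ =>
      obtain ⟨j, k, w₁, hj, hk, h₁⟩ := ih₁
      obtain ⟨j', k', w₂, hj', hk', h₂⟩ := ih₂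
      refine ⟨j, k', w₁.append (fun h => hne ?_) w₂, hj, hk', by simp [h₁, h₂]⟩
      rw [← hk, ← hj', h]
  refine (injective_iff_map_eq_one _).mpr fun x hx => by_contra fun hne => ?_
  obtain ⟨i, i', ω, rfl⟩ := NeWord.exists_prod_eq hne
  obtain ⟨_, _, w, _, _, hw⟩ := hword ω
  exact NeWord.prod_ne_one w (hw.trans hx)

theorem exists_eq_of_mul_prod_mul {i₀ : ι} {x : CoprodI G}
    (hx : x ∉ (of : G i₀ →* CoprodI G).range) :
    ∃ (a a' : G i₀) (j k : ι) (w : NeWord G j k), j ≠ i₀ ∧ k ≠ i₀ ∧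
      x = of a * w.prod * of a' := by
  have hx₁ : x ≠ 1 := fun h => hx ⟨1, by rw [map_one, h]⟩
  obtain ⟨p, q, ω, rfl⟩ := NeWord.exists_prod_eq hx₁
  obtain ⟨a, p', ω', hp', hω⟩ :
      ∃ (a : G i₀) (p' : ι) (ω' : NeWord G p' q), p' ≠ i₀ ∧ ω.prod = of a * ω'.prod := by
    by_cases hp : p = i₀
    · subst hp
      rcases ω.prod_eq_head_or_exists_tail with ⟨-, h⟩ | ⟨k, hk, ω', -, -, h⟩
      · exact absurd ⟨ω.head, h.symm⟩ hx
      · exact ⟨ω.head, k, ω', hk, h⟩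
    · exact ⟨1, p, ω, hp, by simp⟩
  by_cases hq : q = i₀
  · subst hq
    rcases ω'.prod_eq_last_or_exists_init with ⟨rfl, -⟩ | ⟨k, hk, m, -, h⟩
    · exact absurd rfl hp'
    · exact ⟨a, ω'.last, p', k, m, hp', hk, by rw [hω, h, mul_assoc]⟩
  · exact ⟨a, 1, p', q, ω', hp', hq, by simp [hω]⟩

end Monoid.CoprodI

@[simp]
theorem MulEquiv.ulift_apply {α : Type*} [Mul α] (x : ULift α) : MulEquiv.ulift x = x.down := rfl

@[simp]
theorem MulEquiv.ulift_symm_apply {α : Type*} [Mul α] (x : α) :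
    MulEquiv.ulift.symm x = ULift.up x := rfl

namespace Monoid.Coprod

universe u v

/-- The factors of `M ∗ N` as a `Bool`-indexed family, lifted to a common universe so that
`CoprodI` applies. -/
abbrev summand (M : Type u) (N : Type v) : Bool → Type (max u v)
  | true => ULift.{v} M
  | false => ULift.{u} N

variable {M : Type u} {N : Type v} [Group M] [Group N]

instance : ∀ b, Group (summand M N b)
  | true => inferInstanceAs (Group (ULift M))
  | false => inferInstanceAs (Group (ULift N))

theorem isTorsionFree_summand (hM : IsTorsionFree M) (hN : IsTorsionFree N) :
    ∀ b, IsTorsionFree (summand M N b)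
  | true => hM.of_injective (f := (MulEquiv.ulift : ULift M ≃* M).toMonoidHom)
      MulEquiv.ulift.injective
  | false => hN.of_injective (f := (MulEquiv.ulift : ULift N ≃* N).toMonoidHom)
      MulEquiv.ulift.injective

def ofSummand : ∀ b, summand M N b →* M ∗ N
  | true => inl.comp (MulEquiv.ulift : ULift M ≃* M).toMonoidHom
  | false => inr.comp (MulEquiv.ulift : ULift N ≃* N).toMonoidHom

def equivCoprodI : M ∗ N ≃* CoprodI (summand M N) :=
  MonoidHom.toMulEquiv
    (lift ((CoprodI.of : summand M N true →* _).comp MulEquiv.ulift.symm.toMonoidHom)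
      ((CoprodI.of : summand M N false →* _).comp MulEquiv.ulift.symm.toMonoidHom))
    (CoprodI.lift ofSummand)
    (by ext <;> simp [ofSummand])
    (CoprodI.ext_hom _ _ fun b => by cases b <;> ext <;> simp [ofSummand])

theorem equivCoprodI_symm_of_true (x : summand M N true) :
    equivCoprodI.symm (CoprodI.of x) = (inl x.down : M ∗ N) := by
  simp [equivCoprodI, ofSummand]

theorem equivCoprodI_symm_of_false (x : summand M N false) :
    equivCoprodI.symm (CoprodI.of x) = (inr x.down : M ∗ N) := by
  simp [equivCoprodI, ofSummand]

theorem injective_of_neWord {ι : Type*} {G : ι → Type*} [∀ i, Group (G i)]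
    (φ : M ∗ N →* CoprodI G) (π : ι → Bool)
    (hM : ∀ m : M, m ≠ 1 →
      ∃ j k, ∃ w : CoprodI.NeWord G j k, π j = true ∧ π k = true ∧ w.prod = φ (inl m))
    (hN : ∀ n : N, n ≠ 1 →
      ∃ j k, ∃ w : CoprodI.NeWord G j k, π j = false ∧ π k = false ∧ w.prod = φ (inr n)) :
    Injective φ := by
  have hφ : Injective (φ.comp equivCoprodI.symm.toMonoidHom) := by
    rw [← CoprodI.lift_comp_of' (φ.comp _)]
    refine CoprodI.lift_injective_of_neWord _ π fun b x hx => ?_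
    cases b
    · obtain ⟨j, k, w, hj, hk, hw⟩ := hN x.down fun h => hx (ULift.ext _ _ h)
      exact ⟨j, k, w, hj, hk, hw.trans (congrArg φ (equivCoprodI_symm_of_false x).symm)⟩
    · obtain ⟨j, k, w, hj, hk, hw⟩ := hM x.down fun h => hx (ULift.ext _ _ h)
      exact ⟨j, k, w, hj, hk, hw.trans (congrArg φ (equivCoprodI_symm_of_true x).symm)⟩
  simpa [Function.comp_def] using hφ.comp equivCoprodI.injective

end Monoid.Coprod

namespace GZ

variable {A X : Type*} [Group A] [Group X]

def lift (f : A →* X) (x : X) : GZ A →* X :=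
  Coprod.lift f (FreeGroup.lift fun _ => x)

@[simp]
theorem lift_inl (f : A →* X) (x : X) (a : A) : lift f x (Coprod.inl a) = f a :=
  Coprod.lift_apply_inl ..

@[simp]
theorem lift_tGen (f : A →* X) (x : X) : lift f x (tGen A) = x := by
  simp [lift, tGen]

theorem hom_ext {φ ψ : GZ A →* X} (hinl : φ.comp Coprod.inl = ψ.comp Coprod.inl)
    (ht : φ (tGen A) = ψ (tGen A)) : φ = ψ :=
  Coprod.hom_ext hinl (FreeGroup.ext_hom _ _ fun _ => ht)

theorem lift_comp_lift_inl (f : A →* X) (x : X) (y : GZ A) :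
    (lift f x).comp (lift Coprod.inl y) = lift f (lift f x y) :=
  hom_ext (by ext; simp) (by simp)

def substGen (a a' : A) : GZ A →* GZ A :=
  lift Coprod.inl (Coprod.inl a * tGen A * Coprod.inl a')

theorem substGen_injective (a a' : A) : Injective (substGen a a') := by
  have h : (substGen a⁻¹ a'⁻¹).comp (substGen a a') = MonoidHom.id _ :=
    hom_ext (by ext; simp [substGen]) (by simp [substGen, lift_comp_lift_inl, mul_assoc])
  exact LeftInverse.injective (DFunLike.congr_fun h)

theorem lift_mul_mul (f : A →* X) (x : X) (a a' : A) :
    lift f (f a * x * f a') = (lift f x).comp (substGen a a') := by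
  rw [substGen, lift_comp_lift_inl]
  simp

end GZ

namespace Monoid.CoprodI

variable {ι : Type*} {G : ι → Type*} [∀ i, Group (G i)] {A : Type*} [Group A]

theorem injective_gzLift_neWord_prod (htf : ∀ i, IsTorsionFree (G i)) {i₀ : ι} {f : A →* G i₀}
    (hf : Injective f) {j k : ι} (hj : j ≠ i₀) (hk : k ≠ i₀) (w : NeWord G j k) :
    Injective (GZ.lift ((of : G i₀ →* CoprodI G).comp f) w.prod) := by
  classical
  refine Coprod.injective_of_neWord _ (fun l => decide (l = i₀)) (fun a ha => ?_)
    (fun z hz => ?_)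
  · exact ⟨i₀, i₀, .singleton (f a) ((map_ne_one_iff f hf).mpr ha), by simp, by simp, by simp⟩
  · obtain ⟨n, rfl⟩ : ∃ n : ℤ, z = FreeGroup.of () ^ n :=
      ⟨_, (FreeGroup.equivIntOfUnique.symm_apply_apply z).symm⟩
    have himage : GZ.lift ((of : G i₀ →* CoprodI G).comp f) w.prod
        (Coprod.inr (FreeGroup.of () ^ n)) = w.prod ^ n := by simp [GZ.lift]
    obtain ⟨m, rfl | rfl⟩ := Int.eq_nat_or_neg n <;>
      obtain ⟨w', hw'⟩ := w.exists_prod_eq_pow htf (n := m) (by rintro rfl; simp at hz)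
    · exact ⟨j, k, w', by simpa, by simpa, by rw [himage, hw', zpow_natCast]⟩
    · exact ⟨k, j, w'.inv, by simpa, by simpa,
        by rw [himage, NeWord.inv_prod, hw', zpow_neg, zpow_natCast]⟩

theorem injective_gzLift_of_notMem_range (htf : ∀ i, IsTorsionFree (G i)) {i₀ : ι}
    (e : A ≃* G i₀) {x : CoprodI G} (hx : x ∉ (of : G i₀ →* CoprodI G).range) :
    Injective (GZ.lift ((of : G i₀ →* CoprodI G).comp e.toMonoidHom) x) := by
  obtain ⟨a, a', j, k, w, hj, hk, rfl⟩ := exists_eq_of_mul_prod_mul hx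
  have h := GZ.lift_mul_mul ((of : G i₀ →* CoprodI G).comp e.toMonoidHom) w.prod
    (e.symm a) (e.symm a')
  simp only [MonoidHom.comp_apply, MulEquiv.coe_toMonoidHom, MulEquiv.apply_symm_apply] at h
  rw [h, MonoidHom.coe_comp]
  exact (injective_gzLift_neWord_prod htf e.injective hj hk w).comp (GZ.substGen_injective _ _)

end Monoid.CoprodI

/-- **Lemma 1, first assertion**: if `A` and `B` are torsion-free and
`u ∈ (A ∗ B) \ A`, then `⟨A, u⟩ = A ∗ ⟨u⟩∞`, i.e. the homomorphism
`A ∗ ℤ → A ∗ B` restricting to the inclusion on `A` and sending `t` to `u` is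
injective. -/
theorem lemma1_first (A B : Type*) [Group A] [Group B]
    (hA : Monoid.IsTorsionFree A) (hB : Monoid.IsTorsionFree B)
    (u : Coprod A B) (hu : u ∉ (Coprod.inl : A →* Coprod A B).range) :
    Function.Injective
      ⇑(Coprod.lift (Coprod.inl : A →* Coprod A B)
        (FreeGroup.lift fun _ : Unit => u)) := by
  let e : Coprod A B ≃* CoprodI (Coprod.summand A B) := Coprod.equivCoprodI
  have hu' : e u ∉ (CoprodI.of : Coprod.summand A B true →* _).range := by
    rintro ⟨a, ha⟩
    exact hu ⟨a.down, by rw [← Coprod.equivCoprodI_symm_of_true, ha, e.symm_apply_apply]⟩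
  have hΦ : GZ.lift Coprod.inl u = e.symm.toMonoidHom.comp
      (GZ.lift ((CoprodI.of : Coprod.summand A B true →* _).comp MulEquiv.ulift.symm.toMonoidHom)
        (e u)) :=
    GZ.hom_ext (by ext a; exact (Coprod.equivCoprodI_symm_of_true ⟨a⟩).symm) (by simp)
  change Injective (GZ.lift Coprod.inl u)
  rw [hΦ, MonoidHom.coe_comp]
  have hinj := CoprodI.injective_gzLift_of_notMem_range
    (Coprod.isTorsionFree_summand hA hB) MulEquiv.ulift.symm hu'
  exact e.symm.injective.comp hinj
end
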